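/- For a symbol in row echelon form with β_k rows of class k (k = 1,...,p), the number of equations obtained by prolonging each row only by its multiplicative variables x^1,...,x^k is exactly Σ_k k·β_k, and these prolonged equations are linearly independent (they have distinct leading/pivot top-order variables). Hence rank Sym I^{(1)} ≥ Σ_k k·β_k. -/
import Mathlib


open scoped BigOperators

/-- The class of a multi-index `J`: the least `i` with `J i ≠ 0`
(by convention, `classOf p J = p` for the zero multi-index). -/
noncomputable def classOf (p : ℕ) (J : Fin p → ℕ) : ℕ :=
  sInf {i : ℕ | ∀ h : i < p, J ⟨i, h⟩ ≠ 0}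

/-- Multi-indices in `p` variables of order exactly `n`. -/
abbrev OIdx (p n : ℕ) := {J : Fin p → ℕ // ∑ i, J i = n}

noncomputable instance (p n : ℕ) : Fintype (OIdx p n) :=
  Fintype.ofInjective
    (fun J => (fun i => (⟨J.1 i, Nat.lt_succ_of_le
      ((Finset.single_le_sum (f := J.1) (fun _ _ => Nat.zero_le _) (Finset.mem_univ i)).trans
        J.2.le)⟩ : Fin (n+1))) : OIdx p n → (Fin p → Fin (n+1)))
    (fun _ _ h => Subtype.ext (funext fun i => congrArg Fin.val (congrFun h i)))

/-- Prolongation of a symbol row by the variable `x^i`: the column indices `J` are shifted to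
`J,i` in the free module indexed by multi-indices of order `n+1`. -/
noncomputable def shiftRow {p n : ℕ} (i : Fin p) (v : OIdx p n → ℝ) : OIdx p (n+1) → ℝ :=
  fun K => ∑ J : OIdx p n, if K.1 = J.1 + Pi.single i 1 then v J else 0

lemma classOf_le {p : ℕ} {J : Fin p → ℕ} {i : Fin p} (h : J i ≠ 0) : classOf p J ≤ i := by
  apply Nat.sInf_le
  intro hlt
  simpa [Fin.eta] using h

lemma apply_eq_zero_of_lt_classOf {p : ℕ} {J : Fin p → ℕ} {i : Fin p}
    (h : (i : ℕ) < classOf p J) : J i = 0 := by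
  by_contra hne
  exact absurd (classOf_le hne) (not_le.mpr h)

lemma classOf_lt {p n : ℕ} (hn : 0 < n) (J : OIdx p n) : classOf p J.1 < p := by
  have : ∃ i, J.1 i ≠ 0 := by
    by_contra h
    push_neg at h
    have := J.2
    simp [h] at this
    omega
  obtain ⟨i, hi⟩ := this
  exact lt_of_le_of_lt (classOf_le hi) i.2

lemma classOf_add_single {p : ℕ} (J : Fin p → ℕ) (i : Fin p) (h : (i : ℕ) ≤ classOf p J) :
    classOf p (J + Pi.single i 1) = i := by
  apply le_antisymm
  · exact classOf_le (i := i) (by simp)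
  · have hne : Set.Nonempty {b : ℕ | ∀ h : b < p, (J + Pi.single i 1 : Fin p → ℕ) ⟨b, h⟩ ≠ 0} :=
      ⟨p, fun h => absurd h (lt_irrefl p)⟩
    apply le_csInf hne
    intro b hb
    by_contra hlt
    push_neg at hlt
    have hbp : b < p := lt_trans hlt i.2
    have hJb : J ⟨b, hbp⟩ = 0 := by
      have : (⟨b, hbp⟩ : Fin p).1 < classOf p J := lt_of_lt_of_le hlt h
      exact apply_eq_zero_of_lt_classOf this
    have hsb : (Pi.single i 1 : Fin p → ℕ) (⟨b, hbp⟩ : Fin p) = 0 := by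
      apply Pi.single_eq_of_ne
      intro hc
      rw [← hc] at hlt
      simp at hlt
    exact hb hbp (by simp [hJb, hsb])

lemma shiftRow_apply {p n : ℕ} (i : Fin p) (v : OIdx p n → ℝ) (K : OIdx p (n+1)) (J : OIdx p n)
    (hK : K.1 = J.1 + Pi.single i 1) : shiftRow i v K = v J := by
  unfold shiftRow
  rw [Finset.sum_eq_single J]
  · simp [hK]
  · intro J' _ hne
    rw [if_neg]
    intro hc
    apply hne
    apply Subtype.ext
    have : J'.1 + Pi.single i 1 = J.1 + Pi.single i 1 := by rw [← hc, ← hK]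
    exact add_right_cancel this
  · intro h; exact absurd (Finset.mem_univ J) h

lemma shiftRow_apply_zero {p n : ℕ} (i : Fin p) (v : OIdx p n → ℝ) (K : OIdx p (n+1))
    (hK : K.1 i = 0) : shiftRow i v K = 0 := by
  unfold shiftRow
  apply Finset.sum_eq_zero
  intro J _
  rw [if_neg]
  intro hc
  rw [hc] at hK
  simp at hK

lemma exists_pred {p n : ℕ} (K : OIdx p (n+1)) (i : Fin p) (hK : K.1 i ≠ 0) :
    ∃ J : OIdx p n, K.1 = J.1 + Pi.single i 1 := by
  set J₀ : Fin p → ℕ := fun j => K.1 j - (Pi.single i 1 : Fin p → ℕ) j with hJ₀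
  have heq : K.1 = J₀ + Pi.single i 1 := by
    funext j
    by_cases hj : j = i
    · subst hj
      simp [hJ₀]
      omega
    · simp [hJ₀, Pi.single_eq_of_ne hj]
  have hsum : ∑ j, J₀ j = n := by
    have h2 := K.2
    rw [heq] at h2
    simp only [Pi.add_apply] at h2
    rw [Finset.sum_add_distrib, Finset.sum_pi_single'] at h2
    simp at h2
    omega
  exact ⟨⟨J₀, hsum⟩, heq⟩
section Helpers

lemma card_le_fin {p c : ℕ} (h : c < p) : Nat.card {i : Fin p // (i : ℕ) ≤ c} = c + 1 := by
  have e : {i : Fin p // (i : ℕ) ≤ c} ≃ Fin (c + 1) :=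
    { toFun := fun i => ⟨i.1.1, Nat.lt_succ_of_le i.2⟩
      invFun := fun j => ⟨⟨j.1, lt_of_le_of_lt (Nat.le_of_lt_succ j.2) h⟩, Nat.le_of_lt_succ j.2⟩
      left_inv := fun i => by ext; rfl
      right_inv := fun j => by ext; rfl }
  rw [Nat.card_congr e]
  simp

end Helpers


/-- For a symbol in row echelon form (rows `v r` with pivot `piv r`, every nonzero entry of a
row lying in a column of class `≥` the class of its pivot, the rows linearly independent),
prolonging each row only by its multiplicative variables `x^i`, `i ≤ class(pivot)`, produces
exactly `∑_k k·β_k` linearly independent equations, where `β_k` is the number of rows of class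
`k`; hence `rank Sym I^{(1)} ≥ ∑_k k·β_k`. (Classes here are 0-based: `1`-based class `k`
corresponds to `classOf = k - 1` and has `k` multiplicative variables.) -/
theorem prolonged_symbol_rows_independent (p n m : ℕ) (hn : 0 < n)
    (v : Fin m → (OIdx p n → ℝ)) (piv : Fin m → OIdx p n)
    (hpiv : ∀ r, v r (piv r) ≠ 0)
    (hech : ∀ r K, v r K ≠ 0 → classOf p (piv r).1 ≤ classOf p K.1)
    (hli : LinearIndependent ℝ v) :
    LinearIndependent ℝ
      (fun t : (Σ r : Fin m, {i : Fin p // (i : ℕ) ≤ classOf p (piv r).1}) =>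
        shiftRow t.2.1 (v t.1)) ∧
    Nat.card (Σ r : Fin m, {i : Fin p // (i : ℕ) ≤ classOf p (piv r).1})
      = ∑ k ∈ Finset.Icc 1 p, k * Nat.card {r : Fin m // classOf p (piv r).1 = k - 1} ∧
    ∑ k ∈ Finset.Icc 1 p, k * Nat.card {r : Fin m // classOf p (piv r).1 = k - 1}
      ≤ Module.finrank ℝ (Submodule.span ℝ
          {w : OIdx p (n+1) → ℝ | ∃ (r : Fin m) (i : Fin p), w = shiftRow i (v r)}) := by
  classical
  set ι := (Σ r : Fin m, {i : Fin p // (i : ℕ) ≤ classOf p (piv r).1}) with hι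
  -- Part 1 : linear independence
  have hLI : LinearIndependent ℝ (fun t : ι => shiftRow t.2.1 (v t.1)) := by
    rw [Fintype.linearIndependent_iff]
    intro g hg
    have hgK : ∀ K : OIdx p (n+1), ∑ t : ι, g t * shiftRow t.2.1 (v t.1) K = 0 := by
      intro K
      have h := congrFun hg K
      simpa [Finset.sum_apply] using h
    rintro ⟨r₀, i, hi⟩
    set c : Fin m → ℝ :=
      fun r => if h : (i : ℕ) ≤ classOf p (piv r).1 then g ⟨r, ⟨i, h⟩⟩ else 0 with hcdef
    have key : ∀ J : OIdx p n, ∑ r, c r * v r J = 0 := by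
      intro J
      by_cases h1 : (i : ℕ) ≤ classOf p J.1
      · have hKsum : ∑ j, (J.1 + Pi.single i 1 : Fin p → ℕ) j = n + 1 := by
          simp only [Pi.add_apply]
          rw [Finset.sum_add_distrib, Finset.sum_pi_single']
          simp [J.2]
        set K : OIdx p (n+1) := ⟨J.1 + Pi.single i 1, hKsum⟩ with hKdef
        have h0 := hgK K
        rw [← Finset.univ_sigma_univ, Finset.sum_sigma] at h0
        rw [← h0]
        apply Finset.sum_congr rfl
        intro r _
        have hshift0 : ∀ j : Fin p, (j : ℕ) ≠ (i : ℕ) →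
            (j : ℕ) ≤ classOf p (piv r).1 → shiftRow j (v r) K = 0 := by
          intro j hji hjr
          rcases lt_or_gt_of_ne hji with hlt | hgt
          · apply shiftRow_apply_zero
            have hJj : J.1 j = 0 := apply_eq_zero_of_lt_classOf (lt_of_lt_of_le hlt h1)
            have hs : (Pi.single i 1 : Fin p → ℕ) j = 0 :=
              Pi.single_eq_of_ne (fun hc' => hji (congrArg Fin.val hc')) _
            show (J.1 + Pi.single i 1 : Fin p → ℕ) j = 0
            simp [hJj, hs]
          · by_cases hKj : K.1 j = 0
            · exact shiftRow_apply_zero j (v r) K hKj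
            · obtain ⟨J', hJ'⟩ := exists_pred K j hKj
              rw [shiftRow_apply j (v r) K J' hJ']
              by_contra hvz
              have hle := hech r J' hvz
              have hJ'i : J'.1 i ≠ 0 := by
                have h1' : K.1 i = J'.1 i + (Pi.single j 1 : Fin p → ℕ) i := by
                  rw [hJ']; rfl
                have hs : (Pi.single j 1 : Fin p → ℕ) i = 0 :=
                  Pi.single_eq_of_ne (fun hc' => hji (congrArg Fin.val hc').symm) _
                have hKi : K.1 i = J.1 i + 1 := by
                  show (J.1 + Pi.single i 1 : Fin p → ℕ) i = J.1 i + 1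
                  simp
                omega
              have hcl := classOf_le hJ'i
              omega
        by_cases hr : (i : ℕ) ≤ classOf p (piv r).1
        · rw [Finset.sum_eq_single (⟨i, hr⟩ : {j : Fin p // (j : ℕ) ≤ classOf p (piv r).1})]
          · rw [shiftRow_apply i (v r) K J rfl]
            simp only [hcdef]
            rw [dif_pos hr]
          · intro j _ hne
            rw [hshift0 j.1 (fun h => hne (Subtype.ext (Fin.ext h))) j.2, mul_zero]
          · intro hmem; exact absurd (Finset.mem_univ _) hmem
        · rw [Finset.sum_eq_zero]
          · simp only [hcdef]
            rw [dif_neg hr, zero_mul]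
          · intro j _
            have hj2 := j.2
            rw [hshift0 j.1 (by omega) j.2, mul_zero]
      · push_neg at h1
        apply Finset.sum_eq_zero
        intro r _
        by_cases hr : (i : ℕ) ≤ classOf p (piv r).1
        · have hv : v r J = 0 := by
            by_contra hvz
            have := hech r J hvz
            omega
          rw [hv, mul_zero]
        · simp only [hcdef]
          rw [dif_neg hr, zero_mul]
    have hsum0 : ∑ r, c r • v r = 0 := by
      funext J
      have := key J
      simpa [Finset.sum_apply] using this
    have hc0 := Fintype.linearIndependent_iff.mp hli c hsum0 r₀
    simp only [hcdef] at hc0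
    rw [dif_pos hi] at hc0
    exact hc0
  -- Part 2 : cardinality
  have hcard : Nat.card ι = ∑ r : Fin m, (classOf p (piv r).1 + 1) := by
    rw [Nat.card_eq_fintype_card, Fintype.card_sigma]
    apply Finset.sum_congr rfl
    intro r _
    rw [← Nat.card_eq_fintype_card]
    exact card_le_fin (classOf_lt hn (piv r))
  have hcount : ∑ r : Fin m, (classOf p (piv r).1 + 1)
      = ∑ k ∈ Finset.Icc 1 p, k * Nat.card {r : Fin m // classOf p (piv r).1 = k - 1} := by
    have hmaps : ∀ r ∈ (Finset.univ : Finset (Fin m)),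
        classOf p (piv r).1 ∈ Finset.range p :=
      fun r _ => Finset.mem_range.mpr (classOf_lt hn (piv r))
    rw [← Finset.sum_fiberwise_of_maps_to hmaps (fun r => classOf p (piv r).1 + 1)]
    refine Finset.sum_nbij' (fun j => j + 1) (fun k => k - 1) ?_ ?_ ?_ ?_ ?_
    · intro a ha
      simp only [Finset.mem_range] at ha
      simp only [Finset.mem_Icc]
      omega
    · intro a ha
      simp only [Finset.mem_Icc] at ha
      simp only [Finset.mem_range]
      omega
    · intro a _
      show a + 1 - 1 = a
      omega
    · intro a ha
      simp only [Finset.mem_Icc] at ha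
      show a - 1 + 1 = a
      omega
    · intro a ha
      simp only [Finset.mem_range] at ha
      have hstep : ∀ r ∈ Finset.univ.filter (fun r => classOf p (piv r).1 = a),
          classOf p (piv r).1 + 1 = a + 1 := by
        intro r hr
        simp only [Finset.mem_filter] at hr
        rw [hr.2]
      rw [Finset.sum_congr rfl hstep, Finset.sum_const, smul_eq_mul]
      have hfib : Nat.card {r : Fin m // classOf p (piv r).1 = a + 1 - 1}
          = (Finset.univ.filter (fun r => classOf p (piv r).1 = a)).card := by
        rw [Nat.card_eq_fintype_card, Fintype.card_subtype]
        congr 1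
      rw [hfib, mul_comm]
  -- Part 3 : rank bound
  set W := Submodule.span ℝ
      {w : OIdx p (n+1) → ℝ | ∃ (r : Fin m) (i : Fin p), w = shiftRow i (v r)} with hW
  have hmemW : ∀ t : ι, shiftRow t.2.1 (v t.1) ∈ W := fun t =>
    Submodule.subset_span ⟨t.1, t.2.1, rfl⟩
  have hli2 : LinearIndependent ℝ (fun t : ι => (⟨shiftRow t.2.1 (v t.1), hmemW t⟩ : W)) := by
    apply LinearIndependent.of_comp W.subtype
    exact hLI
  have hrank : Fintype.card ι ≤ Module.finrank ℝ W := hli2.fintype_card_le_finrank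
  refine ⟨hLI, hcard.trans hcount, ?_⟩
  rw [← hcount, ← hcard, Nat.card_eq_fintype_card]
  exact hrank
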